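/- For every n ≥ 1, the foliage map f restricts to an order isomorphism from H_b^n onto B_n and from H_c^n onto C_n; consequently f : H_b ∪ H_c → B ∪ C is a bijection which respects the orders: for all v, w ∈ H_b (resp. v, w ∈ H_c), v < w if and only if f(v) < f(w). -/

import Mathlib

/-! STATEMENT 12: the foliage map restricts to an order isomorphism
`H_b^n → B_n` and `H_c^n → C_n`, giving an order-respecting bijection
`H_b ∪ H_c → B ∪ C`. -/

/-- The three-letter alphabet `A = {a, b, c}`. -/
inductive Letter : Type
  | a | b | c
deriving DecidableEq

/-- Words on the alphabet. -/
abbrev Word := List Letter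

/-- The free magma `M(A)` on the alphabet: binary complete planar rooted trees
with leaves labelled by letters (fully parenthesized expressions). -/
inductive FM : Type
  | leaf : Letter → FM
  | node : FM → FM → FM
deriving DecidableEq

/-- The foliage map `f : M(A) → A*` (drop all brackets). -/
def fol : FM → Word
  | FM.leaf d => [d]
  | FM.node t t' => fol t ++ fol t'

/-! ### The ordered families of trees `H_b^n`, `H_c^n`

Each level is built as a *sorted list* (increasing with respect to the total
order of the construction); across levels, trees of higher level (with more
leaves) are *smaller*.  The `H_c`-levels are produced by a single
table-building recursion. -/

/-- Table of the levels `H_c^1, …, H_c^n` (entry `i` is the sorted list of the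
trees of `H_c^i`; entry `0` is empty).

* `H_c^1 = {c}`.
* For `m = 2k` even, `H_c^m = ⋃_{i=1}^{k} {(v,w) : v ∈ H_b^i, w ∈ H_c^{m−i}}`,
  ordered lexicographically (`(v,w) < (v′,w′)` iff `v < v′`, or `v = v′` and
  `w < w′`; `v`'s with more leaves are smaller, so the blocks appear for
  `i = k, k−1, …, 1`), where `H_b^1 = {b}` and `H_b^i = {(a,v′) : v′ ∈ H_c^{i−1}}`.
* For `m = 2k+1` odd, additionally the block
  `E_k = {((a,v),w) : v, w ∈ H_c^k, v ≥ w}` is prepended (its elements are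
  smaller than all other elements of `H_c^m`), ordered lexicographically in
  `(v,w)`. -/
def HClevels : ℕ → List (List FM)
  | 0 => [[]]
  | n + 1 =>
    let t := HClevels n
    let C : ℕ → List FM := fun i => t.getD i []
    let m := n + 1
    let k := m / 2
    let prods : List FM :=
      (List.range k).flatMap (fun j =>
        let i := k - j
        if i = 1 then
          (C (m - 1)).map (fun w => FM.node (FM.leaf Letter.b) w)
        else
          (C (i - 1)).flatMap (fun v =>
            (C (m - i)).map (fun w =>
              FM.node (FM.node (FM.leaf Letter.a) v) w)))
    let Ck := C k
    let Ek : List FM :=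
      (List.range Ck.length).flatMap (fun r =>
        (List.range (r + 1)).map (fun s =>
          FM.node (FM.node (FM.leaf Letter.a) (Ck.getD r (FM.leaf Letter.a)))
            (Ck.getD s (FM.leaf Letter.a))))
    let Cm : List FM :=
      if m = 1 then [FM.leaf Letter.c]
      else if m % 2 = 0 then prods
      else Ek ++ prods
    t ++ [Cm]

/-- The level `H_c^n`, as a sorted (increasing) list of trees. -/
def HCn (n : ℕ) : List FM := (HClevels n).getD n []

/-- The level `H_b^n`, as a sorted (increasing) list of trees:
`H_b^1 = {b}` and `H_b^n = {(a,v) : v ∈ H_c^{n−1}}` with the inherited order. -/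
def HBn : ℕ → List FM
  | 0 => []
  | 1 => [FM.leaf Letter.b]
  | n + 2 => (HCn (n + 1)).map (fun v => FM.node (FM.leaf Letter.a) v)

/-- The level (number of leaves) of a tree. -/
def lev (h : FM) : ℕ := (fol h).length

/-- Position of a tree inside its level `H_c^{lev h}`. -/
def cIdx (h : FM) : ℕ := (HCn (lev h)).findIdx (fun x => decide (x = h))

/-- Position of a tree inside its level `H_b^{lev h}`. -/
def bIdx (h : FM) : ℕ := (HBn (lev h)).findIdx (fun x => decide (x = h))

/-- The strict total order on `H_c = ⋃_n H_c^n`: trees of higher level are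
smaller, trees of the same level are compared by position in the sorted level. -/
def cLt (v w : FM) : Prop := lev w < lev v ∨ (lev v = lev w ∧ cIdx v < cIdx w)

/-- `v ≤ w` in `H_c`. -/
def cLe (v w : FM) : Prop := cLt v w ∨ v = w

/-- The strict total order on `H_b = ⋃_n H_b^n`: trees of higher level are
smaller, trees of the same level are compared by position in the sorted level. -/
def bLt (v w : FM) : Prop := lev w < lev v ∨ (lev v = lev w ∧ bIdx v < bIdx w)

/-- `v ≤ w` in `H_b`. -/
def bLe (v w : FM) : Prop := bLt v w ∨ v = w

/-! ### The ordered families of words `B_n`, `C_n`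

Each level is built as a *sorted list* (increasing with respect to the total
order of the construction); across levels, longer words are *smaller*. -/

/-- Table of the word levels `C_1, …, C_n` (entry `i` is the sorted list of the
words of `C_i`; entry `0` is empty): `C_1 = {c}`; for `m = 2k` even,
`C_m = ⋃_{i=1}^{k} B_i C_{m−i}` ordered lexicographically in `(v,w)` (blocks for
`i = k, …, 1`, with `B_1 = {b}` and `B_i = aC_{i−1}` for `i ≥ 2`); for
`m = 2k+1` odd, additionally the block `D_k = {avw : v,w ∈ C_k, v ≥ w}` is
prepended (its elements being smaller), ordered lexicographically in `(v,w)`. -/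
def CWlevels : ℕ → List (List Word)
  | 0 => [[]]
  | n + 1 =>
    let t := CWlevels n
    let C : ℕ → List Word := fun i => t.getD i []
    let m := n + 1
    let k := m / 2
    let prods : List Word :=
      (List.range k).flatMap (fun j =>
        let i := k - j
        if i = 1 then
          (C (m - 1)).map (fun w => Letter.b :: w)
        else
          (C (i - 1)).flatMap (fun v =>
            (C (m - i)).map (fun w => Letter.a :: (v ++ w))))
    let Ck := C k
    let Dk : List Word :=
      (List.range Ck.length).flatMap (fun r =>
        (List.range (r + 1)).map (fun s =>
          Letter.a :: (Ck.getD r [] ++ Ck.getD s [])))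
    let Cm : List Word :=
      if m = 1 then [[Letter.c]]
      else if m % 2 = 0 then prods
      else Dk ++ prods
    t ++ [Cm]

/-- The word level `C_n`, as a sorted (increasing) list. -/
def CWn (n : ℕ) : List Word := (CWlevels n).getD n []

/-- The word level `B_n`, as a sorted (increasing) list: `B_1 = {b}`,
`B_n = aC_{n−1}` with the inherited order. -/
def BWn : ℕ → List Word
  | 0 => []
  | 1 => [[Letter.b]]
  | n + 2 => (CWn (n + 1)).map (fun v => Letter.a :: v)

/-- Position of a word inside its level `C_{|w|}`. -/
def cwIdx (w : Word) : ℕ := (CWn w.length).findIdx (fun x => decide (x = w))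

/-- Position of a word inside its level `B_{|w|}`. -/
def bwIdx (w : Word) : ℕ := (BWn w.length).findIdx (fun x => decide (x = w))

/-- The strict total order on the set of words `C = ⋃_n C_n`. -/
def cwLt (v w : Word) : Prop :=
  w.length < v.length ∨ (v.length = w.length ∧ cwIdx v < cwIdx w)

/-- The strict total order on the set of words `B = ⋃_n B_n`. -/
def bwLt (v w : Word) : Prop :=
  w.length < v.length ∨ (v.length = w.length ∧ bwIdx v < bwIdx w)

/-!
Both `H_c` and `C` are produced by one and the same recursion, in the free magma and in the
free monoid respectively, and `fol` commutes with its three generators `c`, `(b, ·)` and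
`((a, ·), ·)`; hence `fol` maps each sorted level of trees onto the sorted level of words.
It is then an order isomorphism as soon as the word levels have no repetitions. Every word of
`C` is in Polish notation for `c` nullary, `b` unary and `a` binary, and such words are uniquely
readable: `a v w` determines `v` and `w`, and the length of `v` determines the block of the
recursion the word comes from. The words of `B` are not in Polish notation, which separates
`B` from `C`.
-/

theorem List.nodup_flatMap_map {ι κ α : Type*} {l : List ι} {m : ι → List κ} {g : ι → κ → α}
    (hl : l.Nodup) (hm : ∀ i ∈ l, (m i).Nodup)
    (hg : ∀ i ∈ l, ∀ j ∈ m i, ∀ i' ∈ l, ∀ j' ∈ m i', g i j = g i' j' → i = i' ∧ j = j') :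
    (l.flatMap fun i => (m i).map (g i)).Nodup := by
  refine List.nodup_flatMap.2 ⟨fun i hi => (hm i hi).map_on fun j hj j' hj' h =>
    (hg i hi j hj i hi j' hj' h).2, hl.pairwise_of_forall_ne fun i hi i' hi' hne x hx hx' => ?_⟩
  obtain ⟨j, hj, rfl⟩ := List.mem_map.1 hx
  obtain ⟨j', hj', h⟩ := List.mem_map.1 hx'
  exact hne (hg i' hi' j' hj' i hi j hj h).1.symm

theorem List.injOn_of_nodup_map_of_graded {α β : Type*} {L : ℕ → List α} {f : α → β}
    (g : β → ℕ) (hnd : ∀ n, ((L n).map f).Nodup) (hg : ∀ n, ∀ x ∈ L n, g (f x) = n) :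
    Set.InjOn f {x | ∃ n, x ∈ L n} := by
  rintro x ⟨n, hx⟩ y ⟨m, hy⟩ h
  obtain rfl : n = m := (hg n x hx).symm.trans (h ▸ hg m y hy)
  exact List.inj_on_of_nodup_map (hnd n) hx hy h

theorem List.findIdx_map_eq_of_injOn {α β : Type*} [DecidableEq α] [DecidableEq β]
    {f : α → β} {l : List α} {a : α} (hf : ∀ x ∈ l, f x = f a → x = a) :
    (l.map f).findIdx (fun x => decide (x = f a)) = l.findIdx (fun x => decide (x = a)) := by
  rw [findIdx_map]
  induction l with
  | nil => rfl
  | cons x l ih =>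
    have hx : f x = f a ↔ x = a := ⟨hf x mem_cons_self, congrArg f⟩
    simp only [findIdx_cons, Function.comp_apply, hx, ih fun y hy => hf y (mem_cons_of_mem x hy)]

namespace Foliage

open List

section LevelTable

variable {α β : Type*} (c : α) (nb : α → α) (na : α → α → α) (d : α)

def prodPiece (C : ℕ → List α) (m i : ℕ) : List α :=
  if i = 1 then (C (m - 1)).map nb
  else (C (i - 1)).flatMap fun v => (C (m - i)).map fun w => na v w

def prodBlock (C : ℕ → List α) (m : ℕ) : List α :=
  (range (m / 2)).flatMap fun j => prodPiece nb na C m (m / 2 - j)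

def diagBlock (C : ℕ → List α) (k : ℕ) : List α :=
  (range (C k).length).flatMap fun r =>
    (range (r + 1)).map fun s => na ((C k).getD r d) ((C k).getD s d)

def nextLevel (C : ℕ → List α) (m : ℕ) : List α :=
  if m = 1 then [c]
  else if m % 2 = 0 then prodBlock nb na C m
  else diagBlock na d C (m / 2) ++ prodBlock nb na C m

/-- The recursion shared by `HClevels` and `CWlevels`: `c`, `nb`, `na` stand for `c`,
`b ·` and `a · ·`, and `d` is the default value of `getD`, never read inside the table. -/
def levelTable : ℕ → List (List α)
  | 0 => [[]]
  | n + 1 => levelTable n ++ [nextLevel c nb na d (fun i => (levelTable n).getD i []) (n + 1)]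

def level (n : ℕ) : List α := (levelTable c nb na d n).getD n []

variable {c nb na d}

theorem length_levelTable (n : ℕ) : (levelTable c nb na d n).length = n + 1 := by
  induction n with
  | zero => rfl
  | succ n ih => simp [levelTable, ih]

theorem getD_levelTable {n i : ℕ} (hi : i ≤ n) :
    (levelTable c nb na d n).getD i [] = level c nb na d i := by
  induction n with
  | zero =>
    obtain rfl : i = 0 := by omega
    rfl
  | succ n ih =>
    rcases hi.lt_or_eq with hi | rfl
    · rw [levelTable, getD_append _ _ _ _ (by simp [length_levelTable]; omega), ih (by omega)]
    · rfl

theorem nextLevel_congr {C C' : ℕ → List α} {m : ℕ} (h : ∀ i < m, C i = C' i) :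
    nextLevel c nb na d C m = nextLevel c nb na d C' m := by
  have hpiece : ∀ j < m / 2,
      prodPiece nb na C m (m / 2 - j) = prodPiece nb na C' m (m / 2 - j) := by
    intro j hj
    unfold prodPiece
    split_ifs
    · rw [h _ (by omega)]
    · rw [h _ (by omega), h _ (by omega)]
  have hprod : prodBlock nb na C m = prodBlock nb na C' m :=
    flatMap_congr fun j hj => hpiece j (mem_range.1 hj)
  rcases Nat.eq_zero_or_pos m with rfl | hm
  · rfl
  · simp only [nextLevel, diagBlock, hprod, h (m / 2) (by omega)]

theorem level_succ (n : ℕ) :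
    level c nb na d (n + 1) = nextLevel c nb na d (level c nb na d) (n + 1) := by
  rw [level, levelTable, getD_append_right _ _ _ _ (by simp [length_levelTable])]
  simp only [length_levelTable, Nat.sub_self, getD_cons_zero]
  exact nextLevel_congr fun i hi => getD_levelTable (by omega)

section Map

variable {c' : β} {nb' : β → β} {na' : β → β → β} {d' : β} {f : α → β}

theorem map_nextLevel (hc : f c = c') (hb : ∀ x, f (nb x) = nb' (f x))
    (ha : ∀ x y, f (na x y) = na' (f x) (f y)) (C : ℕ → List α) (m : ℕ) :
    (nextLevel c nb na d C m).map f = nextLevel c' nb' na' d' (fun i => (C i).map f) m := by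
  have hpiece (i : ℕ) :
      (prodPiece nb na C m i).map f = prodPiece nb' na' (fun i => (C i).map f) m i := by
    unfold prodPiece
    split_ifs <;> simp [map_flatMap, flatMap_map, Function.comp_def, hb, ha]
  have hprod : (prodBlock nb na C m).map f = prodBlock nb' na' (fun i => (C i).map f) m := by
    simp only [prodBlock, map_flatMap, hpiece]
  have hdiag (k : ℕ) :
      (diagBlock na d C k).map f = diagBlock na' d' (fun i => (C i).map f) k := by
    simp only [diagBlock, map_flatMap, length_map, map_map]
    refine flatMap_congr fun r hr => map_congr_left fun s hs => ?_
    rw [mem_range] at hr hs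
    have hs : s < (C k).length := by omega
    rw [Function.comp_apply, ha, getD_eq_getElem _ _ hr, getD_eq_getElem _ _ hs,
      getD_eq_getElem _ _ (by simpa), getD_eq_getElem _ _ (by simpa), getElem_map, getElem_map]
  unfold nextLevel
  split_ifs <;> simp [hc, hprod, hdiag]

theorem map_levelTable (hc : f c = c') (hb : ∀ x, f (nb x) = nb' (f x))
    (ha : ∀ x y, f (na x y) = na' (f x) (f y)) (n : ℕ) :
    (levelTable c nb na d n).map (map f) = levelTable c' nb' na' d' n := by
  induction n with
  | zero => rfl
  | succ n ih =>
    have hC : (fun i => ((levelTable c nb na d n).getD i []).map f) =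
        fun i => (levelTable c' nb' na' d' n).getD i [] := by
      funext i
      rw [← ih, ← getD_map _ [] (map f)]
      rfl
    rw [levelTable, levelTable, map_append, ih, map_singleton, map_nextLevel hc hb ha, hC]

theorem map_level (hc : f c = c') (hb : ∀ x, f (nb x) = nb' (f x))
    (ha : ∀ x y, f (na x y) = na' (f x) (f y)) (n : ℕ) :
    (level c nb na d n).map f = level c' nb' na' d' n := by
  rw [level, level, ← map_levelTable hc hb ha n, ← getD_map _ [] (map f)]
  rfl

end Map

theorem mem_prodPiece {C : ℕ → List α} {m i : ℕ} {x : α} (hx : x ∈ prodPiece nb na C m i) :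
    (i = 1 ∧ ∃ y ∈ C (m - 1), x = nb y) ∨
      (i ≠ 1 ∧ ∃ y ∈ C (i - 1), ∃ z ∈ C (m - i), x = na y z) := by
  unfold prodPiece at hx
  split_ifs at hx with hi
  · obtain ⟨y, hy, rfl⟩ := mem_map.1 hx
    exact .inl ⟨hi, y, hy, rfl⟩
  · obtain ⟨y, hy, hx⟩ := mem_flatMap.1 hx
    obtain ⟨z, hz, rfl⟩ := mem_map.1 hx
    exact .inr ⟨hi, y, hy, z, hz, rfl⟩

theorem mem_diagBlock {C : ℕ → List α} {k : ℕ} {x : α} (hx : x ∈ diagBlock na d C k) :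
    ∃ y ∈ C k, ∃ z ∈ C k, x = na y z := by
  obtain ⟨r, hr, hx⟩ := mem_flatMap.1 hx
  obtain ⟨s, hs, rfl⟩ := mem_map.1 hx
  rw [mem_range] at hr hs
  exact ⟨_, getD_eq_getElem _ _ hr ▸ getElem_mem hr, _,
    getD_eq_getElem _ _ (show s < (C k).length by omega) ▸ getElem_mem _, rfl⟩

theorem mem_nextLevel {C : ℕ → List α} {m : ℕ} {x : α} (hx : x ∈ nextLevel c nb na d C m) :
    (m = 1 ∧ x = c) ∨ (∃ n, n + 1 = m ∧ ∃ y ∈ C n, x = nb y) ∨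
      ∃ p q, p + q + 1 = m ∧ ∃ y ∈ C p, ∃ z ∈ C q, x = na y z := by
  have hprod (hx : x ∈ prodBlock nb na C m) : (∃ n, n + 1 = m ∧ ∃ y ∈ C n, x = nb y) ∨
      ∃ p q, p + q + 1 = m ∧ ∃ y ∈ C p, ∃ z ∈ C q, x = na y z := by
    obtain ⟨j, hj, hx⟩ := mem_flatMap.1 hx
    rw [mem_range] at hj
    rcases mem_prodPiece hx with ⟨-, y, hy, rfl⟩ | ⟨-, y, hy, z, hz, rfl⟩
    · exact .inl ⟨m - 1, by omega, y, hy, rfl⟩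
    · exact .inr ⟨_, _, by omega, y, hy, z, hz, rfl⟩
  unfold nextLevel at hx
  split_ifs at hx with h1 h2
  · exact .inl ⟨h1, mem_singleton.1 hx⟩
  · exact .inr (hprod hx)
  · rcases mem_append.1 hx with hx | hx
    · obtain ⟨y, hy, z, hz, rfl⟩ := mem_diagBlock hx
      exact .inr (.inr ⟨_, _, by omega, y, hy, z, hz, rfl⟩)
    · exact .inr (hprod hx)

theorem level_induction {P : ℕ → α → Prop} (hc : P 1 c)
    (hb : ∀ n x, P n x → P (n + 1) (nb x))
    (ha : ∀ p q x y, P p x → P q y → P (p + q + 1) (na x y)) :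
    ∀ n, ∀ x ∈ level c nb na d n, P n x := by
  intro n
  induction n using Nat.strong_induction_on with
  | _ n ih =>
    intro x hx
    rcases n with _ | n
    · simp [level, levelTable] at hx
    rw [level_succ] at hx
    rcases mem_nextLevel hx with
      ⟨h1, rfl⟩ | ⟨k, hk, y, hy, rfl⟩ | ⟨p, q, hpq, y, hy, z, hz, rfl⟩
    · rwa [h1]
    · rw [← hk]
      exact hb _ _ (ih k (by omega) y hy)
    · rw [← hpq]
      exact ha _ _ _ _ (ih p (by omega) y hy) (ih q (by omega) z hz)

section Nodup

variable {S : Set α} {sz : α → ℕ} {C : ℕ → List α} {m : ℕ}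

theorem nodup_prodPiece (hb : S.InjOn nb) (ha : (S ×ˢ S).InjOn (Function.uncurry na))
    (hC : ∀ i < m, ∀ x ∈ C i, x ∈ S) (hnd : ∀ i < m, (C i).Nodup) {i : ℕ} (hi : 1 ≤ i)
    (him : i ≤ m) : (prodPiece nb na C m i).Nodup := by
  unfold prodPiece
  split_ifs
  · exact (hnd _ (by omega)).map_on fun x hx y hy =>
      hb (hC _ (by omega) x hx) (hC _ (by omega) y hy)
  · refine nodup_flatMap_map (hnd _ (by omega)) (fun _ _ => hnd _ (by omega)) ?_
    intro y hy z hz y' hy' z' hz' h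
    simpa using ha (x₁ := (y, z)) (x₂ := (y', z'))
      ⟨hC _ (by omega) y hy, hC _ (by omega) z hz⟩
      ⟨hC _ (by omega) y' hy', hC _ (by omega) z' hz'⟩ h

theorem succ_eq_of_mem_prodPiece (ha : (S ×ˢ S).InjOn (Function.uncurry na))
    (hab : ∀ x y z, nb x ≠ na y z) (hC : ∀ i < m, ∀ x ∈ C i, x ∈ S)
    (hsz : ∀ i < m, ∀ x ∈ C i, sz x = i) {i p q : ℕ} {y z : α} (hi : 1 ≤ i) (him : i ≤ m)
    (hp : p < m) (hq : q < m) (hy : y ∈ C p) (hz : z ∈ C q)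
    (hx : na y z ∈ prodPiece nb na C m i) : p + 1 = i := by
  rcases mem_prodPiece hx with ⟨-, y', -, h⟩ | ⟨-, y', hy', z', hz', h⟩
  · exact absurd h.symm (hab _ _ _)
  obtain ⟨rfl, -⟩ : y = y' ∧ z = z' := by
    simpa using ha (x₁ := (y, z)) (x₂ := (y', z')) ⟨hC p hp y hy, hC q hq z hz⟩
      ⟨hC _ (by omega) y' hy', hC _ (by omega) z' hz'⟩ h
  have := hsz p hp y hy
  have := hsz _ (by omega) y hy'
  omega

theorem disjoint_prodPiece (ha : (S ×ˢ S).InjOn (Function.uncurry na))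
    (hab : ∀ x y z, nb x ≠ na y z) (hC : ∀ i < m, ∀ x ∈ C i, x ∈ S)
    (hsz : ∀ i < m, ∀ x ∈ C i, sz x = i) {i i' : ℕ} (hi' : 1 ≤ i') (hlt : i' < i)
    (him : i ≤ m) : (prodPiece nb na C m i).Disjoint (prodPiece nb na C m i') := by
  intro x hx hx'
  rcases mem_prodPiece hx with ⟨h1, -⟩ | ⟨-, y, hy, z, hz, rfl⟩
  · omega
  have := succ_eq_of_mem_prodPiece ha hab hC hsz hi' (by omega) (by omega) (by omega) hy hz hx'
  omega

theorem nodup_prodBlock (hb : S.InjOn nb) (ha : (S ×ˢ S).InjOn (Function.uncurry na))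
    (hab : ∀ x y z, nb x ≠ na y z) (hC : ∀ i < m, ∀ x ∈ C i, x ∈ S)
    (hsz : ∀ i < m, ∀ x ∈ C i, sz x = i) (hnd : ∀ i < m, (C i).Nodup) :
    (prodBlock nb na C m).Nodup := by
  refine nodup_flatMap.2 ⟨fun j hj => nodup_prodPiece hb ha hC hnd ?_ ?_, ?_⟩
  · have := mem_range.1 hj
    omega
  · omega
  refine pairwise_lt_range.imp_of_mem fun hj hj' hlt => disjoint_prodPiece ha hab hC hsz ?_ ?_ ?_
  all_goals
    have := mem_range.1 hj
    have := mem_range.1 hj'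
    omega

theorem nodup_diagBlock (ha : (S ×ˢ S).InjOn (Function.uncurry na)) {k : ℕ}
    (hC : ∀ x ∈ C k, x ∈ S) (hnd : (C k).Nodup) : (diagBlock na d C k).Nodup := by
  refine nodup_flatMap_map nodup_range (fun _ _ => nodup_range) ?_
  intro r hr s hs r' hr' s' hs' h
  simp only [mem_range] at hr hs hr' hs'
  have hs : s < (C k).length := by omega
  have hs' : s' < (C k).length := by omega
  simp only [getD_eq_getElem _ _ hr, getD_eq_getElem _ _ hr', getD_eq_getElem _ _ hs,
    getD_eq_getElem _ _ hs'] at h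
  have := ha (x₁ := (_, _)) (x₂ := (_, _)) ⟨hC _ (getElem_mem hr), hC _ (getElem_mem hs)⟩
    ⟨hC _ (getElem_mem hr'), hC _ (getElem_mem hs')⟩ h
  simpa only [Prod.mk.injEq, hnd.getElem_inj_iff] using this

theorem disjoint_diagBlock_prodBlock (ha : (S ×ˢ S).InjOn (Function.uncurry na))
    (hab : ∀ x y z, nb x ≠ na y z) (hC : ∀ i < m, ∀ x ∈ C i, x ∈ S)
    (hsz : ∀ i < m, ∀ x ∈ C i, sz x = i) (hm : 1 ≤ m) :
    (diagBlock na d C (m / 2)).Disjoint (prodBlock nb na C m) := by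
  intro x hx hx'
  obtain ⟨y, hy, z, hz, rfl⟩ := mem_diagBlock hx
  obtain ⟨j, hj, hx'⟩ := mem_flatMap.1 hx'
  rw [mem_range] at hj
  have := succ_eq_of_mem_prodPiece ha hab hC hsz (by omega) (by omega) (by omega) (by omega)
    hy hz hx'
  omega

theorem nodup_nextLevel (hb : S.InjOn nb) (ha : (S ×ˢ S).InjOn (Function.uncurry na))
    (hab : ∀ x y z, nb x ≠ na y z) (hC : ∀ i < m, ∀ x ∈ C i, x ∈ S)
    (hsz : ∀ i < m, ∀ x ∈ C i, sz x = i) (hnd : ∀ i < m, (C i).Nodup) :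
    (nextLevel c nb na d C m).Nodup := by
  have hprod := nodup_prodBlock hb ha hab hC hsz hnd
  unfold nextLevel
  split_ifs with h1
  · exact nodup_singleton c
  · exact hprod
  · exact nodup_append.2 ⟨nodup_diagBlock ha (hC _ (by omega)) (hnd _ (by omega)), hprod,
      fun x hx y hy hxy => disjoint_diagBlock_prodBlock ha hab hC hsz (by omega) hx (hxy ▸ hy)⟩

theorem nodup_level (hb : S.InjOn nb) (ha : (S ×ˢ S).InjOn (Function.uncurry na))
    (hab : ∀ x y z, nb x ≠ na y z) (hS : ∀ n, ∀ x ∈ level c nb na d n, x ∈ S ∧ sz x = n)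
    (n : ℕ) : (level c nb na d n).Nodup := by
  induction n using Nat.strong_induction_on with
  | _ n ih =>
    rcases n with _ | n
    · exact nodup_nil
    rw [level_succ]
    exact nodup_nextLevel hb ha hab (fun i _ x hx => (hS i x hx).1)
      (fun i _ x hx => (hS i x hx).2) ih

end Nodup

end LevelTable

theorem HCn_eq_level : HCn = level (FM.leaf .c) (FM.node (FM.leaf .b))
    (fun v w => FM.node (FM.node (FM.leaf .a) v) w) (FM.leaf .a) := by
  have hlevels : HClevels = levelTable (FM.leaf .c) (FM.node (FM.leaf .b))
      (fun v w => FM.node (FM.node (FM.leaf .a) v) w) (FM.leaf .a) := by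
    funext n
    induction n with
    | zero => rfl
    | succ n ih =>
      rw [HClevels, levelTable, ← ih]
      rfl
  funext n
  rw [HCn, hlevels, level]

theorem CWn_eq_level : CWn = level [Letter.c] (List.cons .b) (fun v w => .a :: (v ++ w)) [] := by
  have hlevels :
      CWlevels = levelTable [Letter.c] (List.cons .b) (fun v w => .a :: (v ++ w)) [] := by
    funext n
    induction n with
    | zero => rfl
    | succ n ih =>
      rw [CWlevels, levelTable, ← ih]
      rfl
  funext n
  rw [CWn, hlevels, level]

theorem map_fol_HCn (n : ℕ) : (HCn n).map fol = CWn n := by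
  rw [HCn_eq_level, CWn_eq_level]
  exact map_level (f := fol) rfl (fun _ => rfl) (fun _ _ => rfl) n

theorem map_fol_HBn (n : ℕ) : (HBn n).map fol = BWn n := by
  match n with
  | 0 | 1 => rfl
  | n + 2 =>
    rw [HBn, BWn, map_map, ← map_fol_HCn, map_map]
    rfl

theorem fol_mem_CWn {n : ℕ} {v : FM} (hv : v ∈ HCn n) : fol v ∈ CWn n :=
  map_fol_HCn n ▸ mem_map_of_mem hv

theorem fol_mem_BWn {n : ℕ} {v : FM} (hv : v ∈ HBn n) : fol v ∈ BWn n :=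
  map_fol_HBn n ▸ mem_map_of_mem hv

/-- Words in Polish (prefix) notation for `c` nullary, `b` unary and `a` binary. -/
inductive IsPolish : Word → Prop
  | c : IsPolish [.c]
  | b {w : Word} : IsPolish w → IsPolish (.b :: w)
  | a {v w : Word} : IsPolish v → IsPolish w → IsPolish (.a :: (v ++ w))

theorem IsPolish.ne_nil {w : Word} (hw : IsPolish w) : w ≠ [] := by
  cases hw <;> simp

theorem IsPolish.append_inj {u u' s s' : Word} (hu : IsPolish u) (hu' : IsPolish u')
    (h : u ++ s = u' ++ s') : u = u' ∧ s = s' := by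
  induction hu generalizing u' s s' with
  | c => cases hu' <;> simp_all
  | b _ ih =>
    cases hu' with
    | b hw' =>
      obtain ⟨rfl, rfl⟩ := ih hw' (by simpa using h)
      simp
    | _ => simp_all
  | a _ _ ihv ihw =>
    cases hu' with
    | a hv' hw' =>
      simp only [cons_append, cons.injEq, true_and, append_assoc] at h
      obtain ⟨rfl, hws⟩ := ihv hv' h
      obtain ⟨rfl, rfl⟩ := ihw hw' hws
      simp
    | _ => simp_all

theorem isPolish_and_length_of_mem_CWn {n : ℕ} {w : Word} (hw : w ∈ CWn n) :
    IsPolish w ∧ w.length = n := by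
  rw [CWn_eq_level] at hw
  refine level_induction (P := fun n w => IsPolish w ∧ w.length = n) ⟨.c, rfl⟩ ?_ ?_ n w hw
  · rintro n w ⟨hw, rfl⟩
    exact ⟨.b hw, rfl⟩
  · rintro p q v w ⟨hv, rfl⟩ ⟨hw, rfl⟩
    exact ⟨.a hv hw, by simp⟩

theorem nodup_CWn (n : ℕ) : (CWn n).Nodup := by
  rw [CWn_eq_level]
  refine nodup_level (S := {w | IsPolish w}) (sz := List.length) ?_ ?_ (by simp) ?_ n
  · exact (cons_injective (a := Letter.b)).injOn
  · rintro ⟨v, w⟩ ⟨hv, hw⟩ ⟨v', w'⟩ ⟨hv', hw'⟩ h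
    simp only [Function.uncurry_apply_pair, cons.injEq, true_and] at h
    obtain ⟨rfl, rfl⟩ := hv.append_inj hv' h
    rfl
  · intro n w hw
    rw [← CWn_eq_level] at hw
    exact isPolish_and_length_of_mem_CWn hw

theorem length_of_mem_BWn {n : ℕ} {w : Word} (hw : w ∈ BWn n) : w.length = n := by
  match n with
  | 0 => simp [BWn] at hw
  | 1 => simp_all [BWn]
  | n + 2 =>
    obtain ⟨v, hv, rfl⟩ := mem_map.1 hw
    simp [(isPolish_and_length_of_mem_CWn hv).2]

theorem not_isPolish_of_mem_BWn {n : ℕ} {w : Word} (hw : w ∈ BWn n) : ¬IsPolish w := by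
  match n with
  | 0 => simp [BWn] at hw
  | 1 =>
    obtain rfl := mem_singleton.1 hw
    rintro (_ | h)
    exact h.ne_nil rfl
  | n + 2 =>
    obtain ⟨v, hv, rfl⟩ := mem_map.1 hw
    rintro (_ | _ | @⟨v₁, v₂, hv₁, hv₂⟩)
    have := hv₁.append_inj (isPolish_and_length_of_mem_CWn hv).1 (s' := []) (append_nil _).symm
    exact hv₂.ne_nil this.2

theorem nodup_BWn (n : ℕ) : (BWn n).Nodup := by
  match n with
  | 0 => exact nodup_nil
  | 1 => exact nodup_singleton _
  | n + 2 => exact (nodup_CWn _).map cons_injective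

theorem injOn_fol : Set.InjOn fol {h | (∃ n, h ∈ HBn n) ∨ (∃ n, h ∈ HCn n)} := by
  have hB : Set.InjOn fol {h | ∃ n, h ∈ HBn n} :=
    injOn_of_nodup_map_of_graded length (fun n => map_fol_HBn n ▸ nodup_BWn n)
      fun _ _ hv => length_of_mem_BWn (fol_mem_BWn hv)
  have hC : Set.InjOn fol {h | ∃ n, h ∈ HCn n} :=
    injOn_of_nodup_map_of_graded length (fun n => map_fol_HCn n ▸ nodup_CWn n)
      fun _ _ hv => (isPolish_and_length_of_mem_CWn (fol_mem_CWn hv)).2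
  have hBC : ∀ v w, (∃ n, v ∈ HBn n) → (∃ n, w ∈ HCn n) → fol v ≠ fol w := by
    rintro v w ⟨n, hv⟩ ⟨m, hw⟩ h
    exact not_isPolish_of_mem_BWn (fol_mem_BWn hv)
      (h ▸ (isPolish_and_length_of_mem_CWn (fol_mem_CWn hw)).1)
  rintro v (hv | hv) w (hw | hw) h
  · exact hB hv hw h
  · exact absurd h (hBC v w hv hw)
  · exact absurd h.symm (hBC w v hw hv)
  · exact hC hv hw h

theorem bwIdx_fol {n : ℕ} {v : FM} (hv : v ∈ HBn n) : bwIdx (fol v) = bIdx v := by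
  have hlev : lev v = n := length_of_mem_BWn (fol_mem_BWn hv)
  change (BWn (lev v)).findIdx _ = (HBn (lev v)).findIdx _
  rw [hlev, ← map_fol_HBn]
  exact findIdx_map_eq_of_injOn fun x hx h =>
    inj_on_of_nodup_map (map_fol_HBn n ▸ nodup_BWn n) hx hv h

theorem cwIdx_fol {n : ℕ} {v : FM} (hv : v ∈ HCn n) : cwIdx (fol v) = cIdx v := by
  have hlev : lev v = n := (isPolish_and_length_of_mem_CWn (fol_mem_CWn hv)).2
  change (CWn (lev v)).findIdx _ = (HCn (lev v)).findIdx _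
  rw [hlev, ← map_fol_HCn]
  exact findIdx_map_eq_of_injOn fun x hx h =>
    inj_on_of_nodup_map (map_fol_HCn n ▸ nodup_CWn n) hx hv h

end Foliage

open Foliage

/-- For every `n ≥ 1` the foliage map sends the sorted list `H_b^n` to the
sorted list `B_n` and the sorted list `H_c^n` to the sorted list `C_n` (an
order isomorphism of levels, the lists being duplicate-free); consequently
`f : H_b ∪ H_c → B ∪ C` is a bijection onto `B ∪ C` respecting the orders. -/
theorem foliage_order_iso :
    (∀ n : ℕ, 1 ≤ n →
      (HBn n).map fol = BWn n ∧ (HCn n).map fol = CWn n ∧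
      (HBn n).Nodup ∧ (HCn n).Nodup ∧ (BWn n).Nodup ∧ (CWn n).Nodup) ∧
    Set.InjOn fol {h : FM | (∃ n, h ∈ HBn n) ∨ (∃ n, h ∈ HCn n)} ∧
    (∀ v w : FM, (∃ n, v ∈ HBn n) → (∃ n, w ∈ HBn n) →
      (bLt v w ↔ bwLt (fol v) (fol w))) ∧
    (∀ v w : FM, (∃ n, v ∈ HCn n) → (∃ n, w ∈ HCn n) →
      (cLt v w ↔ cwLt (fol v) (fol w))) := by
  refine ⟨fun n _ => ⟨map_fol_HBn n, map_fol_HCn n, ?_, ?_, nodup_BWn n, nodup_CWn n⟩,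
    injOn_fol, ?_, ?_⟩
  · exact (map_fol_HBn n ▸ nodup_BWn n).of_map fol
  · exact (map_fol_HCn n ▸ nodup_CWn n).of_map fol
  · rintro v w ⟨n, hv⟩ ⟨m, hw⟩
    rw [bLt, bwLt, bwIdx_fol hv, bwIdx_fol hw]
    rfl
  · rintro v w ⟨n, hv⟩ ⟨m, hw⟩
    rw [cLt, cwLt, cwIdx_fol hv, cwIdx_fol hw]
    rfl
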